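/- arXiv:1812.07021 — 7 statements merged into one kernel-verified Lean document; each statement's English description precedes it below -/
import Mathlib

section
/- In the quotient algebra A[M^{m×n}]/I, for any function f : [k] → [m], the product of row-sums ∏_{l∈[k]} s_{f(l)} equals the sum over all injective functions g : [k] → [n] of the monomials ∏_{l∈[k]} x_{f(l),g(l)}. -/
open MvPolynomial

/-- In `A[M^{m×n}]/I`, the product of row-sums `∏ s_{f(l)}` equals the sum over
all injective `g : [k] → [n]` of the monomials `∏ x_{f(l),g(l)}`. -/
theorem stmt_3 {A : Type*} [CommRing A] {m n k : ℕ} (f : Fin k → Fin m) :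
    Ideal.Quotient.mk
        (Ideal.span {w : MvPolynomial (Fin m × Fin n) A |
          ∃ (i i' : Fin m) (j : Fin n), w = X (i, j) * X (i', j)})
        (∏ l, ∑ j, X (f l, j)) =
      Ideal.Quotient.mk _
        (∑ g ∈ Finset.univ.filter (fun g : Fin k → Fin n => Function.Injective g),
          ∏ l, X (f l, g l)) := by
  rw [Finset.prod_univ_sum, Ideal.Quotient.eq, Fintype.piFinset_univ]
  rw [← Finset.sum_filter_add_sum_filter_not Finset.univ
    (fun g : Fin k → Fin n => Function.Injective g) (fun g => ∏ l, X (f l, g l))]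
  simp only [add_sub_cancel_left]
  apply Ideal.sum_mem
  intro g hg
  simp only [Finset.mem_filter, Function.Injective, not_forall] at hg
  obtain ⟨l, l', hgl, hll⟩ := hg.2
  have hsub : ({l, l'} : Finset (Fin k)) ⊆ Finset.univ := Finset.subset_univ _
  have hdvd : (X (f l, g l) * X (f l', g l') : MvPolynomial (Fin m × Fin n) A) ∣
      ∏ t, X (f t, g t) := by
    have := Finset.prod_dvd_prod_of_subset ({l, l'} : Finset (Fin k)) Finset.univ
      (fun t => (X (f t, g t) : MvPolynomial (Fin m × Fin n) A)) hsub
    rwa [Finset.prod_pair hll] at this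
  obtain ⟨c, hc⟩ := hdvd
  rw [hc, mul_comm]
  apply Ideal.mul_mem_left
  apply Ideal.subset_span
  exact ⟨f l, f l', g l, by rw [hgl]⟩
end

section
/- For any admissible monomial ω_{f,g} of degree k in A[M^{m×n}], its symmetrization equals ((n−k)!/n!) · ∏_{l∈[k]} s_{f(l)} in the quotient algebra A[M^{m×n}]/I. That is, (1/n!) Σ_{σ∈S_n} σ·ω_{f,g} ≡ ((n−k)!/n!) ∏_{l∈[k]} s_{f(l)} modulo I. -/
open MvPolynomial Equiv Function

theorem aux_exists_extend {n k : ℕ} (g h : Fin k → Fin n) (hg : Injective g)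
    (hh : Injective h) : ∃ σ : Equiv.Perm (Fin n), ∀ l, σ (g l) = h l := by
  classical
  let e : {x : Fin n // x ∈ Set.range g} ≃ {x : Fin n // x ∈ Set.range h} :=
    (Equiv.ofInjective g hg).symm.trans (Equiv.ofInjective h hh)
  have hcard : Fintype.card {x : Fin n // ¬ x ∈ Set.range g} =
      Fintype.card {x : Fin n // ¬ x ∈ Set.range h} := by
    rw [Fintype.card_subtype_compl, Fintype.card_subtype_compl,
      Fintype.card_congr (Equiv.ofInjective g hg).symm,
      Fintype.card_congr (Equiv.ofInjective h hh).symm]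
  let e' := Fintype.equivOfCardEq hcard
  refine ⟨Equiv.subtypeCongr e e', fun l => ?_⟩
  have hp : g l ∈ Set.range g := ⟨l, rfl⟩
  simp [Equiv.subtypeCongr, hp, e]

theorem aux_fiber_card {n k : ℕ} (g h : Fin k → Fin n) (hg : Injective g)
    (hh : Injective h) :
    Fintype.card {σ : Equiv.Perm (Fin n) // ∀ l, σ (g l) = h l} = (n - k).factorial := by
  classical
  obtain ⟨σ₀, hσ₀⟩ := aux_exists_extend g h hg hh
  let e1 : {σ : Equiv.Perm (Fin n) // ∀ l, σ (g l) = h l} ≃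
      {σ : Equiv.Perm (Fin n) // ∀ l, σ (g l) = g l} :=
    { toFun := fun σ => ⟨σ₀⁻¹ * σ.1, fun l => by
        simp [Equiv.Perm.mul_apply, σ.2 l, ← hσ₀ l]⟩
      invFun := fun τ => ⟨σ₀ * τ.1, fun l => by
        simp [Equiv.Perm.mul_apply, τ.2 l, hσ₀ l]⟩
      left_inv := fun σ => by ext x; simp [Equiv.Perm.mul_apply]
      right_inv := fun τ => by ext x; simp [Equiv.Perm.mul_apply] }
  let e2 : {σ : Equiv.Perm (Fin n) // ∀ l, σ (g l) = g l} ≃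
      {σ : Equiv.Perm (Fin n) // ∀ a, ¬ (a ∉ Set.range g) → σ a = a} :=
    Equiv.subtypeEquiv (Equiv.refl _) (fun σ => by
      constructor
      · rintro hs a ha
        obtain ⟨l, rfl⟩ := not_not.1 ha
        exact hs l
      · intro hs l
        exact hs (g l) (not_not.2 ⟨l, rfl⟩))
  rw [Fintype.card_congr (e1.trans (e2.trans
    (Equiv.Perm.subtypeEquivSubtypePerm (fun a => a ∉ Set.range g)).symm)),
    Fintype.card_perm, Fintype.card_subtype_compl,
    Fintype.card_congr (Equiv.ofInjective g hg).symm, Fintype.card_fin, Fintype.card_fin]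

open MvPolynomial in
theorem aux_key {A : Type*} [CommRing A] {m n k : ℕ} (f : Fin k → Fin m)
    (g : Fin k → Fin n) (hg : Injective g) :
    ∑ σ : Equiv.Perm (Fin n), ∏ l, (X (f l, σ (g l)) : MvPolynomial (Fin m × Fin n) A) =
      (n - k).factorial •
        ∑ h ∈ Finset.univ.filter (fun h : Fin k → Fin n => Injective h),
          ∏ l, X (f l, h l) := by
  classical
  have step := Finset.sum_fiberwise_eq_sum_filter (Finset.univ : Finset (Equiv.Perm (Fin n)))
    (Finset.univ.filter (fun h : Fin k → Fin n => Injective h)) (fun σ => σ ∘ g)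
    (fun σ => ∏ l, (X (f l, σ (g l)) : MvPolynomial (Fin m × Fin n) A))
  have hfull : (Finset.univ.filter (fun σ : Equiv.Perm (Fin n) =>
      (σ ∘ g) ∈ Finset.univ.filter (fun h : Fin k → Fin n => Injective h))) = Finset.univ := by
    apply Finset.filter_true_of_mem
    intro σ _
    exact Finset.mem_filter.2 ⟨Finset.mem_univ _, σ.injective.comp hg⟩
  rw [hfull] at step
  rw [← step, Finset.smul_sum]
  refine Finset.sum_congr rfl (fun h hmem => ?_)
  have hh : Injective h := (Finset.mem_filter.1 hmem).2
  have hconst : ∀ σ ∈ Finset.univ.filter (fun σ : Equiv.Perm (Fin n) => σ ∘ g = h),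
      ∏ l, (X (f l, σ (g l)) : MvPolynomial (Fin m × Fin n) A) = ∏ l, X (f l, h l) := by
    intro σ hσ
    refine Finset.prod_congr rfl (fun l _ => ?_)
    have := congrFun (Finset.mem_filter.1 hσ).2 l
    simp only [Function.comp_apply] at this
    rw [this]
  rw [Finset.sum_congr rfl hconst, Finset.sum_const]
  congr 1
  rw [← Fintype.card_subtype]
  have ecard : {σ : Equiv.Perm (Fin n) // ⇑σ ∘ g = h} ≃
      {σ : Equiv.Perm (Fin n) // ∀ l, σ (g l) = h l} :=
    Equiv.subtypeEquivRight (fun σ => by simp [_root_.funext_iff])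
  rw [Fintype.card_congr ecard]
  exact aux_fiber_card g h hg hh

/-- For an admissible monomial `ω_{f,g}` of degree `k`, its symmetrization
equals `((n-k)!/n!) ∏_l s_{f(l)}` modulo the ideal `I` of column products. -/
theorem stmt_9 {A : Type*} [CommRing A] [Algebra ℚ A] {m n k : ℕ}
    (f : Fin k → Fin m) (g : Fin k → Fin n) (hg : Function.Injective g) :
    ((n.factorial : ℚ)⁻¹ •
        ∑ σ : Equiv.Perm (Fin n),
          rename (Prod.map id σ) (∏ l, (X (f l, g l) : MvPolynomial (Fin m × Fin n) A))) -
      (((n - k).factorial : ℚ) / (n.factorial : ℚ)) • ∏ l, ∑ j, X (f l, j) ∈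
    Ideal.span {w : MvPolynomial (Fin m × Fin n) A |
      ∃ (i i' : Fin m) (j : Fin n), w = X (i, j) * X (i', j)} := by
  classical
  set I := Ideal.span {w : MvPolynomial (Fin m × Fin n) A |
      ∃ (i i' : Fin m) (j : Fin n), w = X (i, j) * X (i', j)} with hI
  -- rewrite the renamed sum
  have h1 : ∀ σ : Equiv.Perm (Fin n),
      rename (Prod.map id σ) (∏ l, (X (f l, g l) : MvPolynomial (Fin m × Fin n) A)) =
        ∏ l, X (f l, σ (g l)) := by
    intro σ
    rw [map_prod]
    exact Finset.prod_congr rfl (fun l _ => by rw [rename_X]; rfl)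
  -- expand the product of row sums
  have h2 : (∏ l, ∑ j, (X (f l, j) : MvPolynomial (Fin m × Fin n) A)) =
      ∑ h : Fin k → Fin n, ∏ l, X (f l, h l) := by
    rw [Finset.prod_univ_sum]
    rw [Fintype.piFinset_univ]
  have hsplit : (∑ h : Fin k → Fin n, ∏ l, (X (f l, h l) : MvPolynomial (Fin m × Fin n) A)) =
      (∑ h ∈ Finset.univ.filter (fun h : Fin k → Fin n => Function.Injective h),
        ∏ l, X (f l, h l)) +
      ∑ h ∈ Finset.univ.filter (fun h : Fin k → Fin n => ¬ Function.Injective h),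
        ∏ l, X (f l, h l) :=
    (Finset.sum_filter_add_sum_filter_not _ _ _).symm
  simp only [h1]
  rw [aux_key f g hg, h2, hsplit]
  set Sinj := ∑ h ∈ Finset.univ.filter (fun h : Fin k → Fin n => Function.Injective h),
    ∏ l, (X (f l, h l) : MvPolynomial (Fin m × Fin n) A)
  set Snon := ∑ h ∈ Finset.univ.filter (fun h : Fin k → Fin n => ¬ Function.Injective h),
    ∏ l, (X (f l, h l) : MvPolynomial (Fin m × Fin n) A)
  have hscal : (n.factorial : ℚ)⁻¹ • ((n - k).factorial • Sinj) -
      (((n - k).factorial : ℚ) / (n.factorial : ℚ)) • (Sinj + Snon) =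
      -((((n - k).factorial : ℚ) / (n.factorial : ℚ)) • Snon) := by
    rw [← Nat.cast_smul_eq_nsmul ℚ ((n - k).factorial) Sinj, smul_smul, smul_add]
    rw [show (n.factorial : ℚ)⁻¹ * ((n - k).factorial : ℚ) =
      ((n - k).factorial : ℚ) / (n.factorial : ℚ) by ring]
    abel
  rw [hscal]
  refine neg_mem ?_
  rw [Algebra.smul_def]
  refine Ideal.mul_mem_left _ _ ?_
  refine Ideal.sum_mem _ (fun h hmem => ?_)
  obtain ⟨l₁, l₂, heq, hne⟩ := Function.not_injective_iff.1 (Finset.mem_filter.1 hmem).2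
  have hprod : (∏ l, (X (f l, h l) : MvPolynomial (Fin m × Fin n) A)) =
      (X (f l₁, h l₁) * X (f l₂, h l₁)) *
        ∏ l ∈ (Finset.univ.erase l₁).erase l₂, X (f l, h l) := by
    rw [← Finset.mul_prod_erase Finset.univ _ (Finset.mem_univ l₁),
      ← Finset.mul_prod_erase (Finset.univ.erase l₁) _
        (Finset.mem_erase.2 ⟨Ne.symm hne, Finset.mem_univ l₂⟩), heq]
    ring
  rw [hprod]
  exact Ideal.mul_mem_right _ _ (Ideal.subset_span ⟨f l₁, f l₂, h l₁, rfl⟩)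
end

section
/- Every column-symmetric element of the quotient algebra A[M^{m×n}]/I can be expressed as a polynomial with coefficients in A in the m row-sums s_1, …, s_m. -/
/-!
Average over the column permutations. Modulo `I`, the average of a monomial vanishes as soon as
two of its variables share a column; otherwise the monomial is `∏ₜ x_{r t, c t}` with `c`
injective, and its `Sₙ`-orbit runs over all injective column assignments `g`, each hit equally
often. Expanding `∏ₜ s_{r t}` and discarding the non-injective terms, which lie in `I`, leaves
exactly `∑_g ∏ₜ x_{r t, g t}`. So modulo `I` the sum over `Sₙ` of every polynomial is a polynomial
in the row sums, and for a column-symmetric `p` that sum is `n! • p`.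
-/

open MvPolynomial Function Finset Equiv Nat

theorem Equiv.Perm.exists_comp_eq_of_injective {α β : Type*} [Finite α] {c g : β → α}
    (hc : Injective c) (hg : Injective g) : ∃ σ : Perm α, σ ∘ c = g := by
  classical
  let e : Set.range c ≃ Set.range g := (ofInjective c hc).symm.trans (ofInjective g hg)
  refine ⟨e.extendSubtype, funext fun t => ?_⟩
  simp [e, extendSubtype_apply_of_mem _ _ (Set.mem_range_self t)]

theorem Equiv.Perm.sum_comp_injective {α β M : Type*} [Fintype α] [DecidableEq α] [Fintype β]
    [DecidableEq β] [AddCommMonoid M] {c : β → α} (hc : Injective c) (f : (β → α) → M) :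
    ∑ σ : Perm α, f (σ ∘ c) = #{σ : Perm α | σ ∘ c = c} • ∑ g with Injective g, f g := by
  have himage :
      univ.image (fun σ : Perm α => ⇑σ ∘ c) = ({g | Injective g} : Finset (β → α)) := by
    ext g
    simp only [mem_image, mem_univ, true_and, mem_filter]
    exact ⟨by rintro ⟨σ, rfl⟩; exact σ.injective.comp hc, exists_comp_eq_of_injective hc⟩
  rw [Finset.sum_comp f (fun σ : Perm α => ⇑σ ∘ c), himage, smul_sum]
  refine sum_congr rfl fun g hg => ?_
  obtain ⟨σ₀, rfl⟩ := exists_comp_eq_of_injective hc (mem_filter.1 hg).2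
  congr 1
  refine card_equiv (Equiv.mulLeft σ₀⁻¹) fun σ => ?_
  simp only [mem_filter, mem_univ, true_and, coe_mulLeft, funext_iff, comp_apply, Perm.coe_mul,
    Perm.inv_eq_iff_eq]

theorem MvPolynomial.monomial_one_eq_prod_X {R σ : Type*} [CommSemiring R] (d : σ →₀ ℕ) :
    monomial d (1 : R) = ∏ t : Σ u : d.support, Fin (d u), X (t.1 : σ) := by
  rw [monomial_eq, C_1, one_mul, Finsupp.prod, ← prod_coe_sort, Fintype.prod_sigma]
  simp only [Fin.prod_const]

section

variable (A ι κ : Type*) [CommRing A]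

noncomputable abbrev columnIdeal : Ideal (MvPolynomial (ι × κ) A) :=
  Ideal.span {w | ∃ (i i' : ι) (j : κ), w = X (i, j) * X (i', j)}

noncomputable def rowSumHom [Fintype κ] :
    MvPolynomial ι A →ₐ[A] MvPolynomial (ι × κ) A ⧸ columnIdeal A ι κ :=
  (Ideal.Quotient.mkₐ A _).comp (aeval fun i => ∑ j, X (i, j))

noncomputable def columnSymmetrize [Fintype κ] [DecidableEq κ] :
    MvPolynomial (ι × κ) A →ₗ[A] MvPolynomial (ι × κ) A :=
  ∑ σ : Perm κ, (rename (Prod.map id σ)).toLinearMap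

variable {A ι κ}

theorem columnSymmetrize_apply [Fintype κ] [DecidableEq κ] (p : MvPolynomial (ι × κ) A) :
    columnSymmetrize A ι κ p = ∑ σ : Perm κ, rename (Prod.map id σ) p := by
  simp [columnSymmetrize]

theorem prod_X_mem_columnIdeal {β : Type*} [Fintype β] (r : β → ι) {g : β → κ}
    (hg : ¬Injective g) : ∏ t, (X (r t, g t) : MvPolynomial (ι × κ) A) ∈ columnIdeal A ι κ := by
  classical
  obtain ⟨t, t', hgt, hne⟩ := not_injective_iff.mp hg
  refine Ideal.mem_of_dvd _ (prod_dvd_prod_of_subset {t, t'} univ _ (subset_univ _)) ?_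
  rw [prod_pair hne, hgt]
  exact Ideal.subset_span ⟨r t, r t', g t', rfl⟩

variable [Fintype κ] [DecidableEq κ]

theorem mk_prod_sum_X_eq_sum_injective {β : Type*} [Fintype β] [DecidableEq β] (r : β → ι) :
    Ideal.Quotient.mk (columnIdeal A ι κ) (∏ t, ∑ j, X (r t, j)) =
      Ideal.Quotient.mk _ (∑ g : β → κ with Injective g, ∏ t, X (r t, g t)) := by
  rw [Ideal.Quotient.eq, Fintype.prod_sum, ← sum_filter_add_sum_filter_not univ Injective,
    add_sub_cancel_left]
  exact sum_mem fun g hg => prod_X_mem_columnIdeal r (mem_filter.1 hg).2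

theorem mk_sum_perm_prod_X_mem_range {β : Type*} [Fintype β] (r : β → ι) (c : β → κ) :
    Ideal.Quotient.mk (columnIdeal A ι κ) (∑ σ : Perm κ, ∏ t, X (r t, σ (c t))) ∈
      (rowSumHom A ι κ).range := by
  classical
  by_cases hc : Injective c
  · have hsum :=
      Perm.sum_comp_injective hc fun g => (∏ t, X (r t, g t) : MvPolynomial (ι × κ) A)
    simp only [comp_apply] at hsum
    have hprod :
        rowSumHom A ι κ (∏ t, X (r t)) = Ideal.Quotient.mk _ (∏ t, ∑ j, X (r t, j)) := by
      simp [rowSumHom]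
    rw [hsum, map_nsmul, ← mk_prod_sum_X_eq_sum_injective, ← hprod]
    exact nsmul_mem (AlgHom.mem_range_self _ _) _
  · have hzero :
        Ideal.Quotient.mk (columnIdeal A ι κ) (∑ σ : Perm κ, ∏ t, X (r t, σ (c t))) = 0 :=
      Ideal.Quotient.eq_zero_iff_mem.2
        (sum_mem fun σ _ => prod_X_mem_columnIdeal (g := σ ∘ c) r fun h => hc h.of_comp)
    rw [hzero]
    exact zero_mem _

theorem mk_columnSymmetrize_mem_range (p : MvPolynomial (ι × κ) A) :
    Ideal.Quotient.mk (columnIdeal A ι κ) (columnSymmetrize A ι κ p) ∈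
      (rowSumHom A ι κ).range := by
  induction p using MvPolynomial.induction_on' with
  | monomial d a =>
    rw [← mul_one a, ← smul_eq_mul, ← smul_monomial, map_smul, ← Ideal.Quotient.mkₐ_eq_mk A,
      map_smul]
    refine Subalgebra.smul_mem _ ?_ a
    rw [monomial_one_eq_prod_X, columnSymmetrize_apply]
    simp only [map_prod, rename_X]
    exact mk_sum_perm_prod_X_mem_range _ _
  | add p q hp hq =>
    rw [map_add, map_add]
    exact add_mem hp hq

theorem mk_columnSymmetrize_of_forall_perm {p : MvPolynomial (ι × κ) A}
    (hp : ∀ σ : Perm κ, Ideal.Quotient.mk (columnIdeal A ι κ) (rename (Prod.map id σ) p) =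
      Ideal.Quotient.mk _ p) :
    Ideal.Quotient.mk (columnIdeal A ι κ) (columnSymmetrize A ι κ p) =
      (Fintype.card κ)! • Ideal.Quotient.mk _ p := by
  rw [columnSymmetrize_apply, map_sum, sum_congr rfl fun σ _ => hp σ, sum_const,
    Finset.card_univ, Fintype.card_perm]

theorem exists_rowSumHom_eq_of_forall_perm [Algebra ℚ A] {p : MvPolynomial (ι × κ) A}
    (hp : ∀ σ : Perm κ, Ideal.Quotient.mk (columnIdeal A ι κ) (rename (Prod.map id σ) p) =
      Ideal.Quotient.mk _ p) :
    ∃ G, rowSumHom A ι κ G = Ideal.Quotient.mk _ p := by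
  obtain ⟨G, hG : rowSumHom A ι κ G = _⟩ := mk_columnSymmetrize_mem_range p
  refine ⟨((Fintype.card κ)! : ℚ)⁻¹ • G, ?_⟩
  rw [map_rat_smul, hG, mk_columnSymmetrize_of_forall_perm hp, ← Nat.cast_smul_eq_nsmul ℚ,
    smul_smul, inv_mul_cancel₀ (Nat.cast_ne_zero.2 (factorial_ne_zero _)), one_smul]

end

/-- Every column-symmetric element of `A[M^{m×n}]/I` is a polynomial (with
coefficients in `A`) in the row-sums `s_1, …, s_m`. -/
theorem stmt_10 {A : Type*} [CommRing A] [Algebra ℚ A] (m n : ℕ)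
    (p : MvPolynomial (Fin m × Fin n) A)
    (hp : ∀ σ : Equiv.Perm (Fin n),
      Ideal.Quotient.mk
          (Ideal.span {w : MvPolynomial (Fin m × Fin n) A |
            ∃ (i i' : Fin m) (j : Fin n), w = X (i, j) * X (i', j)})
          (rename (Prod.map id σ) p) =
        Ideal.Quotient.mk _ p) :
    ∃ G : MvPolynomial (Fin m) A,
      Ideal.Quotient.mk
          (Ideal.span {w : MvPolynomial (Fin m × Fin n) A |
            ∃ (i i' : Fin m) (j : Fin n), w = X (i, j) * X (i', j)})
          (aeval (fun i : Fin m => ∑ j, X (i, j)) G) =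
        Ideal.Quotient.mk _ p :=
  exists_rowSumHom_eq_of_forall_perm hp
end

section
/- The algebra map s : A[y_1,…,y_m]/J → (A[M^{m×n}]/I)^{S_n} induced by y_i ↦ s_i is an isomorphism onto the subalgebra of S_n-invariant (column-symmetric) elements of A[M^{m×n}]/I. -/
/-!
`I` is a monomial ideal, so a polynomial lies in `I` exactly when its coefficients vanish on
the monomials that use every column at most once. Such a monomial is `x^{M c}` for a unique
partial map `c` from columns to rows (`colMonomial c`); write `α = rowCount c` for the number of
times `c` hits each row. Everything rests on one coefficient formula
(`coeff_colMonomial_rowSums`): the coefficient of `x^{M c}` in `s(p)` is `α! · coeff_α(p)`.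
Every `α` of total degree at most `n` is a row count and none of degree `n + 1` is, so `s` kills
`J = (y)^(n+1)`, and nothing more once the factorials are invertible. The coefficients of an
invariant class on the `x^{M c}` depend only on the row count, because any two `c` with the same
row count differ by a column permutation; so the class is `s` of `∑ (coefficient / α!) y^α`.
-/

open MvPolynomial Finset

namespace ColumnInvariants

theorem span_prod_X_eq_pow_idealOfVars (σ R : Type*) [CommSemiring R] (k : ℕ) :
    Ideal.span {w : MvPolynomial σ R | ∃ f : Fin k → σ, w = ∏ l, X (f l)} =
      idealOfVars σ R ^ k := by
  rw [idealOfVars, Ideal.span, Ideal.span, Submodule.span_pow]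
  congr 1
  ext w
  simp only [Set.mem_pow, List.prod_ofFn]
  constructor
  · rintro ⟨f, rfl⟩
    exact ⟨fun l => ⟨X (f l), f l, rfl⟩, rfl⟩
  · rintro ⟨f, rfl⟩
    choose g hg using fun l => (f l).2
    exact ⟨g, by simp [hg]⟩

section Placement

variable {ι κ : Type*} [DecidableEq ι] [Fintype κ]

/-- `c j = some i` places the variable `x_{i,j}` in column `j`; `c j = none` leaves it empty. -/
noncomputable def colMonomial [Finite ι] (c : κ → Option ι) : ι × κ →₀ ℕ :=
  Finsupp.equivFunOnFinite.symm fun x => if c x.2 = some x.1 then 1 else 0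

noncomputable def rowCount [Finite ι] (c : κ → Option ι) : ι →₀ ℕ :=
  Finsupp.equivFunOnFinite.symm fun i => #{j | c j = some i}

variable [Fintype ι]

@[simp]
lemma colMonomial_apply (c : κ → Option ι) (i : ι) (j : κ) :
    colMonomial c (i, j) = if c j = some i then 1 else 0 := rfl

@[simp]
lemma rowCount_apply (c : κ → Option ι) (i : ι) : rowCount c i = #{j | c j = some i} := rfl

lemma colMonomial_eq_zero_iff {c : κ → Option ι} : colMonomial c = 0 ↔ ∀ j, c j = none := by
  simp [Finsupp.ext_iff, Option.eq_none_iff_forall_ne_some, forall_comm (α := ι)]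

lemma rowCount_eq_zero_iff {c : κ → Option ι} : rowCount c = 0 ↔ ∀ j, c j = none := by
  simp only [Option.eq_none_iff_forall_ne_some]
  simpa [Finsupp.ext_iff] using forall_comm

lemma degree_rowCount (c : κ → Option ι) : (rowCount c).degree = #{j | c j ≠ none} := by
  simp only [Finsupp.degree_eq_sum, rowCount_apply, card_filter]
  rw [Finset.sum_comm]
  refine Finset.sum_congr rfl fun j _ => ?_
  cases c j <;> simp

lemma degree_rowCount_le (c : κ → Option ι) : (rowCount c).degree ≤ Fintype.card κ :=
  degree_rowCount c ▸ card_filter_le _ _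

lemma colMonomial_comp (c : κ → Option ι) (σ : Equiv.Perm κ) :
    colMonomial (c ∘ σ) = (colMonomial c).mapDomain (Prod.map id σ.symm) := by
  ext ⟨i, j⟩
  exact (Finsupp.mapDomain_equiv_apply (f := (Equiv.refl ι).prodCongr σ.symm)
    (colMonomial c) (i, j)).symm

lemma exists_perm_of_rowCount_eq {c c' : κ → Option ι} (h : rowCount c = rowCount c') :
    ∃ σ : Equiv.Perm κ, c ∘ σ = c' := by
  have hnone (c : κ → Option ι) :
      #{j | c j = none} = Fintype.card κ - (rowCount c).degree := by
    have := card_filter_add_card_filter_not (s := univ) (fun j => c j = none)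
    rw [card_univ] at this
    rw [degree_rowCount, ← this]
    simp
  have hfiber (o : Option ι) : #{j | c' j = o} = #{j | c j = o} := by
    cases o with
    | none => rw [hnone, hnone, h]
    | some i => rw [← rowCount_apply, ← rowCount_apply, h]
  refine ⟨Equiv.ofFiberEquiv fun o => Fintype.equivOfCardEq ?_,
    funext fun j => Equiv.ofFiberEquiv_map _ j⟩
  rw [Fintype.card_subtype, Fintype.card_subtype, hfiber]

lemma exists_colMonomial_eq {d : ι × κ →₀ ℕ} (hle : ∀ i j, d (i, j) ≤ 1)
    (huniq : ∀ i i' j, d (i, j) ≠ 0 → d (i', j) ≠ 0 → i = i') :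
    ∃ c : κ → Option ι, colMonomial c = d := by
  refine ⟨fun j => if hj : ∃ i, d (i, j) ≠ 0 then some hj.choose else none, ?_⟩
  ext ⟨i, j⟩
  simp only [colMonomial_apply]
  split_ifs with hj hc hc
  · cases Option.some_inj.mp hc
    have := hj.choose_spec
    have := hle hj.choose j
    omega
  · by_contra hd
    exact hc (congrArg some (huniq _ _ _ hj.choose_spec (Ne.symm hd)))
  · simp at hc
  · push Not at hj
    exact (hj i).symm

variable [DecidableEq κ]

lemma rowCount_update_some {c : κ → Option ι} {i : ι} {j : κ} (h : c j = none) :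
    rowCount (Function.update c j (some i)) = rowCount c + Finsupp.single i 1 := by
  ext i'
  simp only [rowCount_apply, Finsupp.coe_add, Pi.add_apply, Finsupp.single_apply, card_filter]
  rw [← add_sum_erase _ _ (mem_univ j), ← add_sum_erase _ _ (mem_univ j),
    sum_congr rfl fun j' hj' => by rw [Function.update_of_ne (ne_of_mem_erase hj')]]
  simp only [Function.update_self, h]
  split_ifs <;> simp_all; omega

lemma rowCount_update_none {c : κ → Option ι} {i : ι} {j : κ} (h : c j = some i) :
    rowCount (Function.update c j none) = rowCount c - Finsupp.single i 1 := by
  have := rowCount_update_some (i := i) (Function.update_self j none c)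
  rw [Function.update_idem, ← h, Function.update_eq_self] at this
  rw [this, add_tsub_cancel_right]

lemma colMonomial_sub_single {c : κ → Option ι} {i : ι} {j : κ} (h : c j = some i) :
    colMonomial c - Finsupp.single (i, j) 1 = colMonomial (Function.update c j none) := by
  ext ⟨i', j'⟩
  by_cases hj : j' = j
  · subst hj
    by_cases hi : i' = i
    · simp [h, hi]
    · simp [h, hi, Ne.symm hi]
  · simp [Function.update_of_ne hj, Ne.symm hj]

lemma exists_rowCount_eq {α : ι →₀ ℕ} (h : α.degree ≤ Fintype.card κ) :
    ∃ c : κ → Option ι, rowCount c = α := by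
  induction hk : α.degree generalizing α with
  | zero =>
    exact ⟨fun _ => none, by simp_all [rowCount_eq_zero_iff, Finsupp.degree_eq_zero_iff]⟩
  | succ k ih =>
    obtain ⟨β, hβ, hβk⟩ := Finsupp.exists_le_degree_eq α k (by omega)
    obtain ⟨γ, rfl⟩ := le_iff_exists_add.mp hβ
    obtain ⟨i, rfl⟩ : γ ∈ Set.range (Finsupp.single · 1) := by
      rw [Finsupp.range_single_one]
      simp_all
    obtain ⟨c, rfl⟩ := ih (by omega) hβk
    obtain ⟨j, hj⟩ : ∃ j, c j = none := by
      by_contra! hc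
      have := degree_rowCount c
      simp_all [filter_true_of_mem]
    exact ⟨_, rowCount_update_some hj⟩

lemma exists_colMonomial_eq_iff (d : ι × κ →₀ ℕ) :
    (∃ c : κ → Option ι, colMonomial c = d) ↔
      ∀ i i' j, ¬ Finsupp.single (i, j) 1 + Finsupp.single (i', j) 1 ≤ d := by
  constructor
  · rintro ⟨c, rfl⟩ i i' j hle
    have h1 := hle (i, j)
    have h2 := hle (i', j)
    by_cases hii : i = i'
    · subst hii
      simp only [Finsupp.coe_add, Pi.add_apply, Finsupp.single_eq_same, colMonomial_apply] at h1
      split_ifs at h1 <;> omega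
    · simp only [Finsupp.coe_add, Pi.add_apply, Finsupp.single_apply, Prod.mk.injEq, hii,
        Ne.symm hii, colMonomial_apply] at h1 h2
      split_ifs at h1 h2 with ha hb <;> simp_all
  · intro h
    refine exists_colMonomial_eq (fun i j => ?_) fun i i' j hi hi' => ?_
    · by_contra! hd
      refine h i i j fun x => ?_
      simp only [Finsupp.coe_add, Pi.add_apply, Finsupp.single_apply]
      split_ifs with hx
      · subst hx; omega
      · omega
    · by_contra hne
      refine h i i' j fun x => ?_
      simp only [Finsupp.coe_add, Pi.add_apply, Finsupp.single_apply]
      split_ifs with hx hx' hx''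
      · exact absurd (congrArg Prod.fst (hx.trans hx'.symm)) hne
      · subst hx; omega
      · subst hx''; omega
      · omega

end Placement

section Factorial

variable {ι : Type*} [Fintype ι]

noncomputable def factorialProd (α : ι →₀ ℕ) : ℕ := ∏ i, (α i).factorial

@[simp]
lemma factorialProd_zero : factorialProd (0 : ι →₀ ℕ) = 1 := by
  simp [factorialProd]

lemma factorialProd_ne_zero (α : ι →₀ ℕ) : factorialProd α ≠ 0 :=
  prod_ne_zero_iff.mpr fun _ _ => Nat.factorial_ne_zero _

lemma factorialProd_eq_mul [DecidableEq ι] {α : ι →₀ ℕ} {i : ι} (h : α i ≠ 0) :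
    factorialProd α = α i * factorialProd (α - Finsupp.single i 1) := by
  rw [factorialProd, factorialProd, ← mul_prod_erase _ _ (mem_univ i),
    ← mul_prod_erase _ _ (mem_univ i), ← mul_assoc]
  congr 1
  · simpa using (Nat.mul_factorial_pred h).symm
  · exact prod_congr rfl fun i' hi' => by simp [ne_of_mem_erase hi']

end Factorial

section Ideals

variable {R ι κ : Type*} [CommRing R]

variable (R ι κ) in
noncomputable def columnIdeal : Ideal (MvPolynomial (ι × κ) R) :=
  Ideal.span {w | ∃ (i i' : ι) (j : κ), w = X (i, j) * X (i', j)}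

variable [Fintype κ]

noncomputable def rowSums : MvPolynomial ι R →ₐ[R] MvPolynomial (ι × κ) R :=
  aeval fun i => ∑ j, X (i, j)

lemma rename_rowSums (σ : Equiv.Perm κ) (p : MvPolynomial ι R) :
    rename (Prod.map id σ) (rowSums p) = rowSums p := by
  suffices (rename (Prod.map id σ)).comp rowSums = (rowSums : MvPolynomial ι R →ₐ[R] _) from
    DFunLike.congr_fun this p
  refine algHom_ext fun i => ?_
  simp only [rowSums, AlgHom.comp_apply, aeval_X, map_sum, rename_X, Prod.map_apply, id_eq]
  exact Fintype.sum_equiv σ _ _ fun _ => rfl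

variable [Fintype ι] [DecidableEq ι] [DecidableEq κ]

lemma mem_columnIdeal_iff {r : MvPolynomial (ι × κ) R} :
    r ∈ columnIdeal R ι κ ↔ ∀ c : κ → Option ι, coeff (colMonomial c) r = 0 := by
  have hgen : {w : MvPolynomial (ι × κ) R | ∃ (i i' : ι) (j : κ), w = X (i, j) * X (i', j)} =
      (monomial · 1) '' {e | ∃ (i i' : ι) (j : κ),
        e = Finsupp.single (i, j) 1 + Finsupp.single (i', j) 1} := by
    ext w
    simp only [X, monomial_mul, one_mul, Set.mem_image]
    constructor
    · rintro ⟨i, i', j, rfl⟩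
      exact ⟨_, ⟨i, i', j, rfl⟩, rfl⟩
    · rintro ⟨_, ⟨i, i', j, rfl⟩, rfl⟩
      exact ⟨i, i', j, rfl⟩
  rw [columnIdeal, hgen, mem_ideal_span_monomial_image]
  constructor
  · intro h c
    by_contra hc
    obtain ⟨_, ⟨i, i', j, rfl⟩, hle⟩ := h _ (mem_support_iff.mpr hc)
    exact (exists_colMonomial_eq_iff _).mp ⟨c, rfl⟩ i i' j hle
  · intro h d hd
    by_contra! hne
    obtain ⟨c, rfl⟩ := (exists_colMonomial_eq_iff d).mpr fun i i' j => hne _ ⟨i, i', j, rfl⟩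
    exact mem_support_iff.mp hd (h c)

theorem coeff_colMonomial_rowSums (p : MvPolynomial ι R) (c : κ → Option ι) :
    coeff (colMonomial c) (rowSums p) = factorialProd (rowCount c) * coeff (rowCount c) p := by
  induction p using MvPolynomial.induction_on generalizing c with
  | C a =>
    rw [rowSums, aeval_C, algebraMap_eq, coeff_C, coeff_C]
    have h0 : 0 = colMonomial c ↔ 0 = rowCount c := by
      rw [eq_comm, colMonomial_eq_zero_iff, eq_comm, rowCount_eq_zero_iff]
    rw [if_congr h0 rfl rfl]
    split_ifs with h
    · simp [← h]
    · simp
  | add p q hp hq => simp [hp, hq, mul_add]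
  | mul_X p i ih =>
    set β := rowCount c
    have hterm (j : κ) : coeff (colMonomial c) (rowSums p * X (i, j)) =
        if c j = some i then (factorialProd (β - Finsupp.single i 1) *
          coeff (β - Finsupp.single i 1) p : R) else 0 := by
      rw [coeff_mul_X']
      by_cases hj : c j = some i
      · rw [if_pos (by simp [hj]), if_pos hj, colMonomial_sub_single hj, ih,
          rowCount_update_none hj]
      · rw [if_neg (by simp [hj]), if_neg hj]
    rw [map_mul, rowSums, aeval_X, ← rowSums, mul_sum, coeff_sum,
      sum_congr rfl fun j _ => hterm j, ← sum_filter, sum_const, nsmul_eq_mul, coeff_mul_X',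
      show #{j | c j = some i} = β i from rfl]
    by_cases hβ : β i = 0
    · simp [hβ]
    · rw [if_pos (Finsupp.mem_support_iff.mpr hβ), factorialProd_eq_mul hβ]
      push_cast
      ring

lemma rowSums_mem_columnIdeal {p : MvPolynomial ι R}
    (hp : p ∈ idealOfVars ι R ^ (Fintype.card κ + 1)) : rowSums p ∈ columnIdeal R ι κ := by
  rw [mem_pow_idealOfVars_iff'] at hp
  refine mem_columnIdeal_iff.mpr fun c => ?_
  rw [coeff_colMonomial_rowSums, hp _ (Nat.lt_succ_of_le (degree_rowCount_le c)), mul_zero]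

lemma isUnit_natCast_of_ne_zero [Algebra ℚ R] {k : ℕ} (hk : k ≠ 0) : IsUnit (k : R) := by
  simpa using (isUnit_iff_ne_zero.mpr (Nat.cast_ne_zero.mpr hk : (k : ℚ) ≠ 0)).map
    (algebraMap ℚ R)

lemma mem_pow_idealOfVars_of_rowSums_mem [Algebra ℚ R] {p : MvPolynomial ι R}
    (hp : (rowSums p : MvPolynomial (ι × κ) R) ∈ columnIdeal R ι κ) :
    p ∈ idealOfVars ι R ^ (Fintype.card κ + 1) := by
  refine (mem_pow_idealOfVars_iff' _ _).mpr fun α hα => ?_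
  obtain ⟨c, rfl⟩ := exists_rowCount_eq (κ := κ) (Nat.lt_succ_iff.mp hα)
  have hc := mem_columnIdeal_iff.mp hp c
  rw [coeff_colMonomial_rowSums] at hc
  exact (isUnit_natCast_of_ne_zero (factorialProd_ne_zero _)).mul_right_eq_zero.mp hc

lemma coeff_colMonomial_eq_of_rowCount_eq {q : MvPolynomial (ι × κ) R}
    (hq : ∀ σ : Equiv.Perm κ, rename (Prod.map id σ) q - q ∈ columnIdeal R ι κ)
    {c c' : κ → Option ι} (h : rowCount c = rowCount c') :
    coeff (colMonomial c) q = coeff (colMonomial c') q := by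
  obtain ⟨σ, rfl⟩ := exists_perm_of_rowCount_eq h
  have hinj : Function.Injective (Prod.map id σ.symm : ι × κ → ι × κ) :=
    Function.injective_id.prodMap σ.symm.injective
  have hc := mem_columnIdeal_iff.mp (hq σ.symm) (c ∘ σ)
  rw [coeff_sub, colMonomial_comp, coeff_rename_mapDomain _ hinj, sub_eq_zero] at hc
  rw [hc, colMonomial_comp]

lemma exists_rowSums_sub_mem [Algebra ℚ R] {q : MvPolynomial (ι × κ) R}
    (hq : ∀ σ : Equiv.Perm κ, rename (Prod.map id σ) q - q ∈ columnIdeal R ι κ) :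
    ∃ p : MvPolynomial ι R, rowSums p - q ∈ columnIdeal R ι κ := by
  let pick : (ι →₀ ℕ) → κ → Option ι := Function.invFun rowCount
  refine ⟨∑ α ∈ univ.image (rowCount (κ := κ)), monomial α
    (Ring.inverse (factorialProd α : R) * coeff (colMonomial (pick α)) q), ?_⟩
  refine mem_columnIdeal_iff.mpr fun c => ?_
  rw [coeff_sub, coeff_colMonomial_rowSums, coeff_sum, sum_eq_single (rowCount c), coeff_monomial,
    if_pos rfl, ← mul_assoc, Ring.mul_inverse_cancel _
      (isUnit_natCast_of_ne_zero (factorialProd_ne_zero _)), one_mul,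
    coeff_colMonomial_eq_of_rowCount_eq hq (Function.invFun_eq ⟨c, rfl⟩), sub_self]
  · exact fun α _ hα => by rw [coeff_monomial, if_neg hα]
  · exact fun h => absurd (mem_image_of_mem _ (mem_univ c)) h

end Ideals

end ColumnInvariants

open ColumnInvariants in
/-- Main theorem: the map `s : A[y_1,…,y_m]/J → A[M^{m×n}]/I`, `y_i ↦ s_i`, is
an isomorphism onto the subalgebra of column-symmetric elements: it is well
defined, takes values in the `S_n`-invariants, is injective, and hits every
invariant element. -/
theorem stmt_13 {A : Type*} [CommRing A] [Algebra ℚ A] (m n : ℕ) :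
    (∀ p ∈ Ideal.span {w : MvPolynomial (Fin m) A |
          ∃ f : Fin (n + 1) → Fin m, w = ∏ l, X (f l)},
        aeval (fun i : Fin m => ∑ j, (X (i, j) : MvPolynomial (Fin m × Fin n) A)) p ∈
          Ideal.span {w : MvPolynomial (Fin m × Fin n) A |
            ∃ (i i' : Fin m) (j : Fin n), w = X (i, j) * X (i', j)}) ∧
    (∀ (p : MvPolynomial (Fin m) A) (σ : Equiv.Perm (Fin n)),
        Ideal.Quotient.mk
            (Ideal.span {w : MvPolynomial (Fin m × Fin n) A |
              ∃ (i i' : Fin m) (j : Fin n), w = X (i, j) * X (i', j)})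
            (rename (Prod.map id σ) (aeval (fun i : Fin m => ∑ j, X (i, j)) p)) =
          Ideal.Quotient.mk _ (aeval (fun i : Fin m => ∑ j, X (i, j)) p)) ∧
    (∀ p q : MvPolynomial (Fin m) A,
        Ideal.Quotient.mk
            (Ideal.span {w : MvPolynomial (Fin m × Fin n) A |
              ∃ (i i' : Fin m) (j : Fin n), w = X (i, j) * X (i', j)})
            (aeval (fun i : Fin m => ∑ j, X (i, j)) p) =
          Ideal.Quotient.mk _ (aeval (fun i : Fin m => ∑ j, X (i, j)) q) →
        Ideal.Quotient.mk
            (Ideal.span {w : MvPolynomial (Fin m) A |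
              ∃ f : Fin (n + 1) → Fin m, w = ∏ l, X (f l)}) p =
          Ideal.Quotient.mk _ q) ∧
    (∀ q : MvPolynomial (Fin m × Fin n) A,
        (∀ σ : Equiv.Perm (Fin n),
          Ideal.Quotient.mk
              (Ideal.span {w : MvPolynomial (Fin m × Fin n) A |
                ∃ (i i' : Fin m) (j : Fin n), w = X (i, j) * X (i', j)})
              (rename (Prod.map id σ) q) =
            Ideal.Quotient.mk _ q) →
        ∃ p : MvPolynomial (Fin m) A,
          Ideal.Quotient.mk
              (Ideal.span {w : MvPolynomial (Fin m × Fin n) A |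
                ∃ (i i' : Fin m) (j : Fin n), w = X (i, j) * X (i', j)})
              (aeval (fun i : Fin m => ∑ j, X (i, j)) p) =
            Ideal.Quotient.mk _ q) := by
  have hJ := span_prod_X_eq_pow_idealOfVars (Fin m) A (n + 1)
  refine ⟨fun p hp => ?_, fun p σ => ?_, fun p q h => ?_, fun q hq => ?_⟩
  · rw [hJ] at hp
    exact rowSums_mem_columnIdeal (by simpa using hp)
  · exact congrArg _ (rename_rowSums σ p)
  · rw [Ideal.Quotient.eq, ← map_sub] at h
    rw [Ideal.Quotient.eq, hJ]
    simpa using mem_pow_idealOfVars_of_rowSums_mem (κ := Fin n) h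
  · obtain ⟨p, hp⟩ := exists_rowSums_sub_mem fun σ => Ideal.Quotient.eq.mp (hq σ)
    exact ⟨p, Ideal.Quotient.eq.mpr hp⟩
end

section
/- Any product of n+1 of the row-sums s_{f(1)} s_{f(2)} ⋯ s_{f(n+1)} (for any f : [n+1] → [m]) lies in the ideal I generated by the column products x_{i,j} x_{i',j}. -/
open MvPolynomial

/-- Any product of `n+1` row-sums lies in the ideal `I` generated by the
column products `x_{i,j} x_{i',j}`. -/
theorem stmt_14 {A : Type*} [CommRing A] {m n : ℕ} (f : Fin (n + 1) → Fin m) :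
    (∏ l, ∑ j, (X (f l, j) : MvPolynomial (Fin m × Fin n) A)) ∈
      Ideal.span {w : MvPolynomial (Fin m × Fin n) A |
        ∃ (i i' : Fin m) (j : Fin n), w = X (i, j) * X (i', j)} := by
  rw [Finset.prod_univ_sum]
  apply Ideal.sum_mem
  intro g _
  -- g : Fin (n+1) → Fin n is not injective
  obtain ⟨l, l', hne, hgl⟩ : ∃ l l', l ≠ l' ∧ g l = g l' := by
    have h : ¬ Function.Injective g := by
      intro hinj
      have := Fintype.card_le_of_injective g hinj
      simp at this
    simp only [Function.Injective, not_forall] at h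
    obtain ⟨a, b, hab, hne⟩ := h
    exact ⟨a, b, hne, hab⟩
  have hdvd : (X (f l, g l) * X (f l', g l) : MvPolynomial (Fin m × Fin n) A) ∣
      ∏ l'', X (f l'', g l'') := by
    rw [← Finset.mul_prod_erase Finset.univ _ (Finset.mem_univ l),
      ← Finset.mul_prod_erase _ _
        (Finset.mem_erase.mpr ⟨Ne.symm hne, Finset.mem_univ l'⟩)]
    rw [← hgl]
    ring_nf
    exact Dvd.intro _ rfl
  obtain ⟨c, hc⟩ := hdvd
  rw [hc]
  exact Ideal.mul_mem_right _ _ (Ideal.subset_span ⟨f l, f l', g l, rfl⟩)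
end

section
/- (Symmetric functions property, m = 1 case) Let A be a commutative ring containing ℚ, and I the ideal of A[x_1,…,x_n] generated by x_1²,…,x_n². Every polynomial invariant under all permutations of the variables x_1,…,x_n is congruent modulo I to a unique polynomial (of degree ≤ n) in the single element x_1 + ⋯ + x_n. Equivalently, A[y]/(y^{n+1}) → (A[x_1,…,x_n]/I)^{S_n}, y ↦ x_1+⋯+x_n, is an algebra isomorphism. -/
/-!
Modulo `I = (x_1², …, x_n²)` a polynomial is determined by its coefficients at the squarefree
monomials `x_T = ∏_{i ∈ T} x_i`. By the multinomial theorem the coefficient of `x_T` in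
`(x_1 + ⋯ + x_n)^k` is `k!` if `|T| = k` and `0` otherwise, so the coefficient of `x_T` in
`p(x_1 + ⋯ + x_n)` is `|T|! p_{|T|}`. Since factorials are invertible in `A`, this vanishes for
all `T` exactly when `p_k = 0` for `k ≤ n`. A polynomial symmetric modulo `I` has coefficient at
`x_T` depending only on `|T|`, because `S_n` acts transitively on the `T` of a given size; dividing
these coefficients by `|T|!` gives its preimage `p`.
-/

open MvPolynomial

open scoped Polynomial Nat

namespace Finsupp

variable {σ : Type*}

def IsSquarefree (d : σ →₀ ℕ) : Prop := ∀ i, d i ≤ 1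

namespace IsSquarefree

variable {d d' : σ →₀ ℕ}

theorem apply_eq_ite [DecidableEq σ] (hd : d.IsSquarefree) (i : σ) :
    d i = if i ∈ d.support then 1 else 0 := by
  have := hd i
  split_ifs with hi <;> simp_all; omega

theorem degree_eq_card (hd : d.IsSquarefree) : d.degree = d.support.card := by
  classical
  rw [degree_apply, Finset.card_eq_sum_ones]
  exact Finset.sum_congr rfl fun i hi => by rw [hd.apply_eq_ite, if_pos hi]

theorem degree_le_card [Fintype σ] (hd : d.IsSquarefree) : d.degree ≤ Fintype.card σ :=
  hd.degree_eq_card ▸ Finset.card_le_univ _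

theorem multinomial_eq (hd : d.IsSquarefree) : d.multinomial = d.degree ! := by
  have hfac : ∏ i ∈ d.support, (d i)! = 1 :=
    Finset.prod_eq_one fun i _ => by have := hd i; interval_cases d i <;> rfl
  simpa [hfac, Finsupp.multinomial_eq, degree_apply] using Nat.multinomial_spec d.support d

theorem exists_perm_mapDomain_eq (hd : d.IsSquarefree) (hd' : d'.IsSquarefree)
    (hdeg : d.degree = d'.degree) : ∃ g : Equiv.Perm σ, mapDomain g d = d' := by
  classical
  obtain ⟨g, hg⟩ := (Set.powersetCard.isPretransitive (α := σ) (n := d.degree)).exists_smul_eq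
    ⟨d.support, hd.degree_eq_card.symm⟩ ⟨d'.support, (hdeg.trans hd'.degree_eq_card).symm⟩
  have hsupp : d.support.image g = d'.support := by
    simpa [Finset.smul_finset_def] using congrArg Subtype.val hg
  refine ⟨g, ?_⟩
  ext i
  rw [← equivMapDomain_eq_mapDomain, equivMapDomain_apply, hd.apply_eq_ite, hd'.apply_eq_ite,
    ← hsupp]
  simp [← Equiv.eq_symm_apply]

end IsSquarefree

theorem exists_isSquarefree_degree_eq [Fintype σ] {k : ℕ} (hk : k ≤ Fintype.card σ) :
    ∃ d : σ →₀ ℕ, d.IsSquarefree ∧ d.degree = k := by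
  classical
  obtain ⟨s, -, rfl⟩ := Finset.exists_subset_card_eq (s := Finset.univ) (n := k) hk
  exact ⟨Multiset.toFinsupp s.val, Multiset.nodup_iff_count_le_one.1 s.nodup,
    Multiset.toFinsupp_sum_eq s.val⟩

end Finsupp

namespace MvPolynomial

variable {σ R : Type*}

noncomputable def squaresIdeal (σ R : Type*) [CommSemiring R] : Ideal (MvPolynomial σ R) :=
  Ideal.span {w | ∃ j, w = X j ^ 2}

section CommSemiring

variable [CommSemiring R]

theorem mem_squaresIdeal_iff {f : MvPolynomial σ R} :
    f ∈ squaresIdeal σ R ↔ ∀ d : σ →₀ ℕ, d.IsSquarefree → coeff d f = 0 := by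
  have hgen : {w : MvPolynomial σ R | ∃ j, w = X j ^ 2} =
      (fun s => monomial s 1) '' Set.range fun j => Finsupp.single j 2 := by
    ext w
    simp [X_pow_eq_monomial, eq_comm]
  rw [squaresIdeal, hgen, mem_ideal_span_monomial_image]
  simp only [Set.exists_range_iff, Finsupp.single_le_iff, mem_support_iff]
  refine forall_congr' fun d => ⟨fun h hd => ?_, fun h hf => ?_⟩
  · by_contra hne
    obtain ⟨j, hj⟩ := h hne
    exact absurd (hd j) (by omega)
  · by_contra! hlt
    exact hf (h fun j => Nat.le_of_lt_succ (hlt j))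

variable [Fintype σ]

theorem coeff_sum_X_pow_of_isSquarefree {d : σ →₀ ℕ} (hd : d.IsSquarefree) (k : ℕ) :
    coeff d ((∑ i, X i : MvPolynomial σ R) ^ k) = if d.degree = k then (k ! : R) else 0 := by
  rw [coeff_sum_X_pow_of_fintype]
  change ((if d.degree = k then d.multinomial else 0 : ℕ) : R) = _
  split_ifs with hk
  · rw [hd.multinomial_eq, hk]
  · exact Nat.cast_zero

theorem coeff_aeval_sum_X_of_isSquarefree {d : σ →₀ ℕ} (hd : d.IsSquarefree) (p : R[X]) :
    coeff d (Polynomial.aeval (∑ i, X i : MvPolynomial σ R) p) = d.degree ! * p.coeff d.degree := by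
  induction p using Polynomial.induction_on' with
  | add p q hp hq => simp [hp, hq, mul_add]
  | monomial k a =>
    rw [Polynomial.aeval_monomial, algebraMap_eq, coeff_C_mul,
      coeff_sum_X_pow_of_isSquarefree hd, Polynomial.coeff_monomial]
    split_ifs <;> simp_all [mul_comm]

theorem rename_sum_X (g : Equiv.Perm σ) :
    rename g (∑ i, X i : MvPolynomial σ R) = ∑ i, X i := by
  simp only [map_sum, rename_X]
  exact Equiv.sum_comp g X

theorem rename_aeval_sum_X (g : Equiv.Perm σ) (p : R[X]) :
    rename g (Polynomial.aeval (∑ i, X i : MvPolynomial σ R) p) =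
      Polynomial.aeval (∑ i, X i) p := by
  rw [← Polynomial.aeval_algHom_apply, rename_sum_X]

end CommSemiring

section CommRing

variable [CommRing R]

theorem sub_mem_squaresIdeal_iff {f g : MvPolynomial σ R} :
    f - g ∈ squaresIdeal σ R ↔ ∀ d : σ →₀ ℕ, d.IsSquarefree → coeff d f = coeff d g := by
  simp only [mem_squaresIdeal_iff, coeff_sub, sub_eq_zero]

theorem coeff_eq_of_forall_rename_sub_mem {q : MvPolynomial σ R}
    (hq : ∀ g : Equiv.Perm σ, rename g q - q ∈ squaresIdeal σ R) {d d' : σ →₀ ℕ}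
    (hd : d.IsSquarefree) (hd' : d'.IsSquarefree) (hdeg : d.degree = d'.degree) :
    coeff d q = coeff d' q := by
  obtain ⟨g, rfl⟩ := hd.exists_perm_mapDomain_eq hd' hdeg
  rw [← sub_mem_squaresIdeal_iff.1 (hq g) _ hd', coeff_rename_mapDomain _ g.injective]

end CommRing

end MvPolynomial

section RatAlgebra

variable {R : Type*} [CommSemiring R] [Algebra ℚ R]

theorem natCast_mul_inv_smul {n : ℕ} (hn : n ≠ 0) (a : R) : (n : R) * ((n : ℚ)⁻¹ • a) = a := by
  rw [← nsmul_eq_mul, ← Nat.cast_smul_eq_nsmul ℚ, smul_smul,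
    mul_inv_cancel₀ (Nat.cast_ne_zero.2 hn), one_smul]

theorem isUnit_natCast_of_ne_zero {n : ℕ} (hn : n ≠ 0) : IsUnit (n : R) :=
  IsUnit.of_mul_eq_one _ (natCast_mul_inv_smul hn 1)

end RatAlgebra

namespace MvPolynomial

variable {σ R : Type*} [Fintype σ]

theorem aeval_sum_X_mem_squaresIdeal_iff [CommSemiring R] [Algebra ℚ R] (p : R[X]) :
    Polynomial.aeval (∑ i, X i : MvPolynomial σ R) p ∈ squaresIdeal σ R ↔
      Polynomial.X ^ (Fintype.card σ + 1) ∣ p := by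
  rw [mem_squaresIdeal_iff, Polynomial.X_pow_dvd_iff]
  constructor
  · intro h k hk
    obtain ⟨d, hd, rfl⟩ := Finsupp.exists_isSquarefree_degree_eq (σ := σ) (Nat.lt_succ_iff.1 hk)
    have := h d hd
    rwa [coeff_aeval_sum_X_of_isSquarefree hd,
      (isUnit_natCast_of_ne_zero (Nat.factorial_ne_zero _)).mul_right_eq_zero] at this
  · intro h d hd
    rw [coeff_aeval_sum_X_of_isSquarefree hd, h _ (Nat.lt_succ_of_le hd.degree_le_card), mul_zero]

theorem exists_aeval_sum_X_sub_mem_squaresIdeal [CommRing R] [Algebra ℚ R] {q : MvPolynomial σ R}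
    (hq : ∀ g : Equiv.Perm σ, rename g q - q ∈ squaresIdeal σ R) :
    ∃ p : R[X], p.natDegree ≤ Fintype.card σ ∧
      Polynomial.aeval (∑ i, X i) p - q ∈ squaresIdeal σ R := by
  classical
  let c : ℕ → R := fun k =>
    if h : ∃ d : σ →₀ ℕ, d.IsSquarefree ∧ d.degree = k then coeff h.choose q else 0
  have hc : ∀ d : σ →₀ ℕ, d.IsSquarefree → c d.degree = coeff d q := by
    intro d hd
    have h : ∃ d' : σ →₀ ℕ, d'.IsSquarefree ∧ d'.degree = d.degree := ⟨d, hd, rfl⟩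
    simp only [c, dif_pos h]
    exact coeff_eq_of_forall_rename_sub_mem hq h.choose_spec.1 hd h.choose_spec.2
  refine ⟨∑ k ∈ Finset.range (Fintype.card σ + 1),
    Polynomial.monomial k (((k ! : ℕ) : ℚ)⁻¹ • c k), ?_, ?_⟩
  · exact Polynomial.natDegree_sum_le_of_forall_le _ _ fun k hk =>
      (Polynomial.natDegree_monomial_le _).trans (Nat.lt_succ_iff.1 (Finset.mem_range.1 hk))
  · refine sub_mem_squaresIdeal_iff.2 fun d hd => ?_
    simp only [coeff_aeval_sum_X_of_isSquarefree hd, Polynomial.finsetSum_coeff,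
      Polynomial.coeff_monomial, Finset.sum_ite_eq', Finset.mem_range,
      if_pos (Nat.lt_succ_of_le hd.degree_le_card)]
    rw [natCast_mul_inv_smul (Nat.factorial_ne_zero _), hc d hd]

end MvPolynomial

/-- Symmetric functions property (m = 1): with `I = (x_1²,…,x_n²)`, every
`S_n`-invariant polynomial is congruent mod `I` to a unique polynomial of
degree ≤ n in `x_1 + ⋯ + x_n`; i.e. `A[y]/(y^{n+1}) → (A[x]/I)^{S_n}`,
`y ↦ x_1 + ⋯ + x_n`, is an algebra isomorphism. -/
theorem stmt_15 {A : Type*} [CommRing A] [Algebra ℚ A] (n : ℕ) :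
    (∀ q : MvPolynomial (Fin n) A,
        (∀ σ : Equiv.Perm (Fin n),
          Ideal.Quotient.mk
              (Ideal.span {w : MvPolynomial (Fin n) A | ∃ j : Fin n, w = X j ^ 2})
              (rename σ q) =
            Ideal.Quotient.mk _ q) →
        ∃ p : Polynomial A, p.natDegree ≤ n ∧
          Ideal.Quotient.mk
              (Ideal.span {w : MvPolynomial (Fin n) A | ∃ j : Fin n, w = X j ^ 2})
              (Polynomial.aeval (∑ j, X j) p) =
            Ideal.Quotient.mk _ q) ∧
    (∀ p q : Polynomial A,
        Ideal.Quotient.mk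
            (Ideal.span {w : MvPolynomial (Fin n) A | ∃ j : Fin n, w = X j ^ 2})
            (Polynomial.aeval (∑ j, X j) p) =
          Ideal.Quotient.mk _ (Polynomial.aeval (∑ j, X j) q) →
        Ideal.Quotient.mk (Ideal.span ({Polynomial.X ^ (n + 1)} : Set (Polynomial A))) p =
          Ideal.Quotient.mk _ q) ∧
    (∀ p ∈ Ideal.span ({Polynomial.X ^ (n + 1)} : Set (Polynomial A)),
        Polynomial.aeval (∑ j, (X j : MvPolynomial (Fin n) A)) p ∈
          Ideal.span {w : MvPolynomial (Fin n) A | ∃ j : Fin n, w = X j ^ 2}) ∧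
    (∀ (p : Polynomial A) (σ : Equiv.Perm (Fin n)),
        Ideal.Quotient.mk
            (Ideal.span {w : MvPolynomial (Fin n) A | ∃ j : Fin n, w = X j ^ 2})
            (rename σ (Polynomial.aeval (∑ j, X j) p)) =
          Ideal.Quotient.mk _ (Polynomial.aeval (∑ j, X j) p)) := by
  have hcard : Fintype.card (Fin n) = n := Fintype.card_fin n
  refine ⟨fun q hq => ?_, fun p q h => ?_, fun p hp => ?_, fun p g => ?_⟩
  · obtain ⟨p, hdeg, hp⟩ :=
      exists_aeval_sum_X_sub_mem_squaresIdeal fun g => Ideal.Quotient.eq.1 (hq g)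
    exact ⟨p, hcard ▸ hdeg, Ideal.Quotient.eq.2 hp⟩
  · rw [Ideal.Quotient.eq, ← map_sub] at h
    rw [Ideal.Quotient.eq, Ideal.mem_span_singleton, ← hcard]
    exact (aeval_sum_X_mem_squaresIdeal_iff _).1 h
  · rw [Ideal.mem_span_singleton, ← hcard] at hp
    exact (aeval_sum_X_mem_squaresIdeal_iff p).2 hp
  · rw [rename_aeval_sum_X]
end

section
/- In the quotient algebra A[M^{m×n}]/I, the image of S(ω_{‖f‖}) under y_i ↦ s_i, namely ∏_{l∈[k]} s_{f(l)}, is a sum of admissible monomials ω_{f,g'} all of whose first components f' lie in the orbit ‖f‖ of f under precomposition by S_k; hence the images of distinct degree-k basis monomials of A[y_1,…,y_m] under s lie in linearly independent subspaces indexed by the orbits ‖f‖. -/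
/-!
Expanding `∏ₗ ∑ⱼ x_{f(l),j}` gives `∑_g ω_{f,g}`, and every term with `g` not injective contains
a factor `x_{f(l),j} x_{f(l'),j}` with `l ≠ l'`, so lies in `I`. For the independence, grade
`A[M^{m×n}]` by row content, `x_{i,j} ↦ eᵢ`: then `ω_{f',g}` is homogeneous of degree
`∑ₗ e_{f'(l)}`, which records the fibre cardinalities of `f'` and hence determines its orbit `‖f'‖`.
Distinct orbits thus span subspaces of distinct graded pieces.
-/

open MvPolynomial

def orbSetoid (k m : ℕ) : Setoid (Fin k → Fin m) where
  r f f' := ∃ ε : Equiv.Perm (Fin k), f' = f ∘ ε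
  iseqv := by
    constructor
    · intro f; exact ⟨Equiv.refl _, rfl⟩
    · rintro f f' ⟨ε, rfl⟩; exact ⟨ε.symm, by ext l; simp⟩
    · rintro f f' f'' ⟨ε, rfl⟩ ⟨ε', rfl⟩; exact ⟨ε'.trans ε, by ext l; simp⟩

noncomputable def orbSpan (A : Type*) [CommRing A] (m n k : ℕ) (f : Fin k → Fin m) :
    Submodule A (MvPolynomial (Fin m × Fin n) A) :=
  Submodule.span A
    {w : MvPolynomial (Fin m × Fin n) A |
      ∃ (f' : Fin k → Fin m) (g : Fin k → Fin n),
        (∃ ε : Equiv.Perm (Fin k), f' = f ∘ ε) ∧ Function.Injective g ∧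
          w = ∏ l, X (f' l, g l)}

theorem Ideal.prod_mem_of_mul_mem {R ι : Type*} [CommSemiring R] [DecidableEq ι] {J : Ideal R}
    {s : Finset ι} {x : ι → R} {l l' : ι} (hl : l ∈ s) (hl' : l' ∈ s) (hne : l ≠ l')
    (h : x l * x l' ∈ J) : ∏ i ∈ s, x i ∈ J := by
  have hpair : {l, l'} ⊆ s := Finset.insert_subset hl (Finset.singleton_subset_iff.mpr hl')
  rw [← Finset.prod_sdiff hpair, Finset.prod_pair hne]
  exact J.mul_mem_left _ h

theorem prod_sum_sub_sum_injective_mem {R ι κ : Type*} [CommRing R] [Fintype ι] [DecidableEq ι]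
    [Fintype κ] [DecidableEq κ] {J : Ideal R} (x : ι → κ → R)
    (hJ : ∀ l l' j, l ≠ l' → x l j * x l' j ∈ J) :
    ∏ l, ∑ j, x l j - ∑ g ∈ Finset.univ.filter (fun g : ι → κ => Function.Injective g),
      ∏ l, x l (g l) ∈ J := by
  rw [Finset.prod_univ_sum, Fintype.piFinset_univ,
    ← Finset.sum_filter_add_sum_filter_not Finset.univ (fun g : ι → κ => Function.Injective g),
    add_sub_cancel_left]
  refine J.sum_mem fun g hg => ?_
  obtain ⟨l, l', hgl, hne⟩ : ∃ l l', g l = g l' ∧ l ≠ l' := by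
    simpa [Function.Injective] using (Finset.mem_filter.mp hg).2
  exact Ideal.prod_mem_of_mul_mem (Finset.mem_univ l) (Finset.mem_univ l') hne
    (hgl ▸ hJ l l' (g l) hne)

theorem Finsupp.sum_single_one_apply {ι α : Type*} [Fintype ι] (f : ι → α) (a : α) :
    (∑ l, Finsupp.single (f l) 1 : α →₀ ℕ) a = Nat.card {l // f l = a} := by
  classical
  rw [Finsupp.finsetSum_apply, Nat.card_eq_fintype_card, Fintype.card_subtype]
  simp [Finsupp.single_apply]

theorem exists_perm_eq_comp_of_sum_single_eq {ι α : Type*} [Fintype ι] {f f' : ι → α}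
    (h : (∑ l, Finsupp.single (f l) 1 : α →₀ ℕ) = ∑ l, Finsupp.single (f' l) 1) :
    ∃ ε : Equiv.Perm ι, f' = f ∘ ε := by
  have hcard (a : α) : Nat.card {l // f' l = a} = Nat.card {l // f l = a} := by
    rw [← Finsupp.sum_single_one_apply, ← Finsupp.sum_single_one_apply, h]
  let ε : Equiv.Perm ι := Equiv.ofFiberEquiv fun a => (Finite.card_eq.mp (hcard a)).some
  exact ⟨ε, funext fun l => (Equiv.ofFiberEquiv_map _ l).symm⟩

section RowGrading

variable (A : Type*) [CommRing A] (m n k : ℕ)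

noncomputable def rowWeight : Fin m × Fin n → Fin m →₀ ℕ := fun p => Finsupp.single p.1 1

theorem orbSpan_le_weightedHomogeneousSubmodule (f : Fin k → Fin m) :
    orbSpan A m n k f ≤
      weightedHomogeneousSubmodule A (rowWeight m n) (∑ l, Finsupp.single (f l) 1) := by
  rw [orbSpan, Submodule.span_le]
  rintro _ ⟨_, g, ⟨ε, rfl⟩, -, rfl⟩
  rw [← Equiv.sum_comp ε]
  exact IsWeightedHomogeneous.prod _ _ _ fun l _ => isWeightedHomogeneous_X A _ (f (ε l), g l)

theorem iSupIndep_orbSpan :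
    iSupIndep fun c : Quotient (orbSetoid k m) => orbSpan A m n k c.out := by
  classical
  let content (c : Quotient (orbSetoid k m)) : Fin m →₀ ℕ := ∑ l, Finsupp.single (c.out l) 1
  have hcontent : Function.Injective content := fun c c' h => by
    rw [← c.out_eq, ← c'.out_eq]
    exact Quotient.sound (exists_perm_eq_comp_of_sum_single_eq h)
  have hgraded := (weightedDecomposition A (rowWeight m n)).isInternal.submodule_iSupIndep
  exact (hgraded.comp hcontent).mono fun c => orbSpan_le_weightedHomogeneousSubmodule A m n k c.out

end RowGrading

/-- Modulo `I`, the image `∏_l s_{f(l)}` of the basis monomial `ω_{‖f‖}` under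
`y_i ↦ s_i` is the sum of the admissible monomials `ω_{f,g}`, all of whose
first components lie in the orbit `‖f‖`; and the subspaces spanned by the
admissible monomials with first component in a given orbit form an independent
family indexed by the orbits. -/
theorem stmt_18 {A : Type*} [CommRing A] (m n k : ℕ) (f : Fin k → Fin m) :
    ((∏ l, ∑ j, (X (f l, j) : MvPolynomial (Fin m × Fin n) A)) -
        (∑ g ∈ Finset.univ.filter (fun g : Fin k → Fin n => Function.Injective g),
          ∏ l, X (f l, g l)) ∈
      Ideal.span {w : MvPolynomial (Fin m × Fin n) A |
        ∃ (i i' : Fin m) (j : Fin n), w = X (i, j) * X (i', j)}) ∧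
    ((∑ g ∈ Finset.univ.filter (fun g : Fin k → Fin n => Function.Injective g),
        ∏ l, (X (f l, g l) : MvPolynomial (Fin m × Fin n) A)) ∈
      orbSpan A m n k f) ∧
    iSupIndep (fun c : Quotient (orbSetoid k m) => orbSpan A m n k c.out) := by
  refine ⟨?_, ?_, iSupIndep_orbSpan A m n k⟩
  · exact prod_sum_sub_sum_injective_mem (fun l j => X (f l, j))
      fun l l' j _ => Ideal.subset_span ⟨f l, f l', j, rfl⟩
  · exact Submodule.sum_mem _ fun g hg =>
      Submodule.subset_span ⟨f, g, ⟨1, rfl⟩, (Finset.mem_filter.mp hg).2, rfl⟩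
end
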